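/- Let α ∈ (0,1] be a real number and let a be a populated pre-multi-index. Then the scaling of a satisfies |a| ≥ −2 + α + (α/2)·𝔬(a) + (2−α)·(𝔰(a^𝔟) + 𝔰(a^𝔠) + 𝔰(a^𝔢)) + (1−α)·(𝔰(a^𝔡) + 𝔰(a^𝔣)). -/

import Mathlib

/-- The seven labels 𝔅 = {𝔟,𝔠,𝔡,𝔢,𝔣,𝔤,𝔥}. -/
inductive Lbl : Type
  | b | c | d | e | f | g | h
  deriving DecidableEq

instance instFintypeLbl : Fintype Lbl where
  elems := {Lbl.b, Lbl.c, Lbl.d, Lbl.e, Lbl.f, Lbl.g, Lbl.h}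
  complete := by intro x; cases x <;> decide

/-- Size 𝔰(q) = Σᵢ qᵢ of a finitely supported sequence. -/
def seqSize (q : ℕ →₀ ℕ) : ℕ := q.sum fun _ n => n

/-- Order 𝔬(q) = Σᵢ i·qᵢ of a finitely supported sequence. -/
def seqOrder (q : ℕ →₀ ℕ) : ℕ := q.sum fun i n => i * n

/-- Length 𝔩(q) = max of the support of q (0 if q = 0). -/
def seqLen (q : ℕ →₀ ℕ) : ℕ := q.support.sup id

/-- A pre-multi-index: a family of seven finitely supported sequences. -/
abbrev PMI : Type := Lbl → (ℕ →₀ ℕ)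

/-- Size of a pre-multi-index. -/
def pmiSize (a : PMI) : ℕ := ∑ k : Lbl, seqSize (a k)

/-- Order of a pre-multi-index. -/
def pmiOrder (a : PMI) : ℕ :=
  (∑ k : Lbl, seqOrder (a k)) + seqSize (a Lbl.d) + seqSize (a Lbl.f)
    + 2 * seqSize (a Lbl.g)

/-- Length of a pre-multi-index. -/
def pmiLen (a : PMI) : ℕ := Finset.univ.sup fun k : Lbl => seqLen (a k)

/-- A pre-multi-index is populated if 𝔰(a) = 𝔬(a) + 1. -/
def Populated (a : PMI) : Prop := pmiSize a = pmiOrder a + 1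

/-- The scaling |a| of a pre-multi-index, for a real parameter α. -/
noncomputable def scaling (α : ℝ) (a : PMI) : ℝ :=
  -(2 - α) * (pmiSize a : ℝ) + 2 * (pmiOrder a : ℝ)
    + (2 - α) * ((seqSize (a Lbl.b) : ℝ) + (seqSize (a Lbl.c) : ℝ) + (seqSize (a Lbl.e) : ℝ))
    + (1 - α) * ((seqSize (a Lbl.d) : ℝ) + (seqSize (a Lbl.f) : ℝ))
    - α * (seqSize (a Lbl.g) : ℝ)

/-- 1^𝔨_k : the pre-multi-index whose only nonzero entry is a single 1 in the
𝔨-component at index k. -/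
noncomputable def onePMI (k : Lbl) (n : ℕ) : PMI :=
  fun k' => if k' = k then Finsupp.single n 1 else 0

/-- A derivator (𝔨₀,𝔨₁,k₀,k₁). -/
def IsDerivator (l₀ l₁ : Lbl) (k₀ k₁ : ℕ) : Prop :=
  (l₀ = l₁ ∧ k₁ = k₀ + 1) ∨
    (((l₀ = Lbl.c ∧ l₁ = Lbl.d) ∨ (l₀ = Lbl.e ∧ l₁ = Lbl.f) ∨ (l₀ = Lbl.f ∧ l₁ = Lbl.g))
      ∧ k₁ = k₀)

/-! Using 𝔰(a) = 𝔬(a) + 1, the scaling |a| exceeds the claimed bound by exactly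
α (𝔬(a)/2 − 𝔰(a^𝔤)), and 𝔬(a) ≥ 2 𝔰(a^𝔤) because every 𝔤-entry contributes at least 2 to the order. -/

lemma two_mul_seqSize_g_le_pmiOrder (a : PMI) : 2 * seqSize (a Lbl.g) ≤ pmiOrder a := by
  unfold pmiOrder
  omega

lemma scaling_eq_of_populated {a : PMI} (ha : Populated a) (α : ℝ) :
    scaling α a = α - 2 + α * (pmiOrder a : ℝ)
      + (2 - α) * ((seqSize (a Lbl.b) : ℝ) + (seqSize (a Lbl.c) : ℝ) + (seqSize (a Lbl.e) : ℝ))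
      + (1 - α) * ((seqSize (a Lbl.d) : ℝ) + (seqSize (a Lbl.f) : ℝ))
      - α * (seqSize (a Lbl.g) : ℝ) := by
  have hsize : (pmiSize a : ℝ) = pmiOrder a + 1 := by exact_mod_cast ha
  rw [scaling, hsize]
  ring

theorem stmt3 (α : ℝ) (hα : α ∈ Set.Ioc (0:ℝ) 1) (a : PMI) (ha : Populated a) :
    -2 + α + (α / 2) * (pmiOrder a : ℝ)
        + (2 - α) * ((seqSize (a Lbl.b) : ℝ) + (seqSize (a Lbl.c) : ℝ)
            + (seqSize (a Lbl.e) : ℝ))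
        + (1 - α) * ((seqSize (a Lbl.d) : ℝ) + (seqSize (a Lbl.f) : ℝ))
      ≤ scaling α a := by
  obtain ⟨hα0, -⟩ := hα
  have hg : 2 * (seqSize (a Lbl.g) : ℝ) ≤ pmiOrder a := by
    exact_mod_cast two_mul_seqSize_g_le_pmiOrder a
  rw [scaling_eq_of_populated ha]
  linarith [mul_le_mul_of_nonneg_left hg hα0.le]
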